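/- Canonical anticommutation relations for the operators Ψ and Φ acting on the space of operators at the free fermion point: for every parity-homogeneous X ∈ End((ℂ²)^{⊗L}), all 1 ≤ k, l ≤ L and all signs ε, ε′ ∈ {+,−}: Ψ_k^ε(Ψ_l^{ε′}(X)) + Ψ_l^{ε′}(Ψ_k^ε(X)) = 0, Φ_k^ε(Φ_l^{ε′}(X)) + Φ_l^{ε′}(Φ_k^ε(X)) = 0, and Ψ_k^ε(Φ_l^{ε′}(X)) + Φ_l^{ε′}(Ψ_k^ε(X)) = δ_{k,l} δ_{ε, −ε′} X. -/

import Mathlib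

open Matrix Complex

/-- A one-site operator: the 2×2 matrix `M` acting at the `k`-th tensor factor of
`(ℂ²)^{⊗L}` and as the identity elsewhere. -/
noncomputable def siteOp (L : ℕ) (M : Matrix (Fin 2) (Fin 2) ℂ) (k : Fin L) :
    Matrix (Fin L → Fin 2) (Fin L → Fin 2) ℂ := fun f g =>
  (if ∀ j, j ≠ k → f j = g j then 1 else 0) * M (f k) (g k)

noncomputable def pauli1 : Matrix (Fin 2) (Fin 2) ℂ := !![0, 1; 1, 0]
noncomputable def pauli2 : Matrix (Fin 2) (Fin 2) ℂ := !![0, -I; I, 0]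
noncomputable def pauli3 : Matrix (Fin 2) (Fin 2) ℂ := !![1, 0; 0, -1]
noncomputable def sigPlus : Matrix (Fin 2) (Fin 2) ℂ := ((1 : ℂ) / 2) • (pauli1 + I • pauli2)
noncomputable def sigMinus : Matrix (Fin 2) (Fin 2) ℂ := ((1 : ℂ) / 2) • (pauli1 - I • pauli2)

/-- The Jordan–Wigner string `∏_{j=1}^{k−1} (c σ_j³)`. -/
noncomputable def jwString (L : ℕ) (c : ℂ) (k : Fin L) :
    Matrix (Fin L → Fin 2) (Fin L → Fin 2) ℂ :=
  (((List.finRange L).filter fun j => j < k).map fun j => c • siteOp L pauli3 j).prod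

/-- The Jordan–Wigner fermion `ψ_k^ε = σ_k^ε ∏_{j<k}(∓iσ_j³)`; the sign `ε` is encoded
as a Boolean (`true` for `+`, `false` for `−`). -/
noncomputable def psi (L : ℕ) (ε : Bool) (k : Fin L) :
    Matrix (Fin L → Fin 2) (Fin L → Fin 2) ℂ :=
  siteOp L (if ε then sigPlus else sigMinus) k * jwString L (if ε then -I else I) k

/-- The parity operator `P = ∏_{j=1}^{L} σ_j³`. -/
noncomputable def parityOp (L : ℕ) : Matrix (Fin L → Fin 2) (Fin L → Fin 2) ℂ :=
  ((List.finRange L).map fun j => siteOp L pauli3 j).prod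

/-- `y^{−2ε̂}` where `ε̂ = ±1` according to the sign `ε`. -/
noncomputable def ysgn (y : ℂ) (ε : Bool) : ℂ := if ε then y⁻¹ ^ 2 else y ^ 2

/-- `Ψ_k^ε(X) = ψ_k^ε X − (−1)^{p(X)} X ψ_k^ε`, for `X` parity-homogeneous of parity `p`. -/
noncomputable def PsiOp (L : ℕ) (ε : Bool) (k : Fin L) (p : ℕ)
    (X : Matrix (Fin L → Fin 2) (Fin L → Fin 2) ℂ) :
    Matrix (Fin L → Fin 2) (Fin L → Fin 2) ℂ :=
  psi L ε k * X - ((-1 : ℂ)) ^ p • (X * psi L ε k)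

/-- `Φ_k^ε(X) = (1 − y^{−2ε̂})⁻¹ (ψ_k^ε X − y^{−2ε̂} (−1)^{p(X)} X ψ_k^ε)`. -/
noncomputable def PhiOp (L : ℕ) (y : ℂ) (ε : Bool) (k : Fin L) (p : ℕ)
    (X : Matrix (Fin L → Fin 2) (Fin L → Fin 2) ℂ) :
    Matrix (Fin L → Fin 2) (Fin L → Fin 2) ℂ :=
  (1 - ysgn y ε)⁻¹ • (psi L ε k * X - ysgn y ε • ((-1 : ℂ)) ^ p • (X * psi L ε k))

lemma fin2cases (x : Fin 2) : x = 0 ∨ x = 1 := by omega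
lemma sumCollapse2 (F : (Fin L → Fin 2) → ℂ) (f : Fin L → Fin 2) (k : Fin L)
    (h0 : ∀ h : Fin L → Fin 2, (¬ ∀ i, i ≠ k → f i = h i) → F h = 0) :
    ∑ h : Fin L → Fin 2, F h = F (Function.update f k 0) + F (Function.update f k 1) := by
  have hne : Function.update f k 0 ≠ Function.update f k 1 := by
    intro h
    have := congrFun h k
    simp [Function.update_self] at this
  rw [← Finset.sum_pair hne]
  apply (Finset.sum_subset (Finset.subset_univ _) _).symm
  intro h _ hmem
  simp only [Finset.mem_insert, Finset.mem_singleton] at hmem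
  push_neg at hmem
  apply h0
  intro hall
  have : h = Function.update f k (h k) := by
    funext i
    by_cases hi : i = k
    · subst hi; simp
    · rw [Function.update_of_ne hi]; exact (hall i hi).symm
  rcases fin2cases (h k) with h2 | h2 <;> rw [h2] at this
  · exact hmem.1 this
  · exact hmem.2 this
lemma siteOp_mul_same (M N : Matrix (Fin 2) (Fin 2) ℂ) (k : Fin L) :
    siteOp L M k * siteOp L N k = siteOp L (M * N) k := by
  ext f g
  rw [Matrix.mul_apply]
  rw [sumCollapse2 (fun hh => siteOp L M k f hh * siteOp L N k hh g) f k]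
  · simp only [siteOp, Function.update_self, Function.update_of_ne, Matrix.mul_apply,
      Fin.sum_univ_two]
    by_cases hc : ∀ j, j ≠ k → f j = g j
    · have h1 : ∀ j, j ≠ k → f j = Function.update f k (0:Fin 2) j := by
        intro j hj; rw [Function.update_of_ne hj]
      have h2 : ∀ j, j ≠ k → f j = Function.update f k (1:Fin 2) j := by
        intro j hj; rw [Function.update_of_ne hj]
      have h3 : ∀ j, j ≠ k → Function.update f k (0:Fin 2) j = g j := by
        intro j hj; rw [Function.update_of_ne hj]; exact hc j hj
      have h4 : ∀ j, j ≠ k → Function.update f k (1:Fin 2) j = g j := by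
        intro j hj; rw [Function.update_of_ne hj]; exact hc j hj
      simp only [ne_eq] at h1 h2 h3 h4 hc ⊢; rw [if_pos h3, if_pos h1, if_pos h4, if_pos h2, if_pos hc]
      ring
    · have h3 : ¬ ∀ j, j ≠ k → Function.update f k (0:Fin 2) j = g j := by
        intro hall; apply hc; intro j hj
        rw [← Function.update_of_ne hj (0:Fin 2) f]; exact hall j hj
      have h4 : ¬ ∀ j, j ≠ k → Function.update f k (1:Fin 2) j = g j := by
        intro hall; apply hc; intro j hj
        rw [← Function.update_of_ne hj (1:Fin 2) f]; exact hall j hj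
      simp only [ne_eq] at h3 h4 hc ⊢; rw [if_neg h3, if_neg h4, if_neg hc]; ring
  · intro h hh
    simp only [siteOp]
    have : (if ∀ j, j ≠ k → f j = h j then (1:ℂ) else 0) = 0 := by simp [hh]
    rw [this]; ring
lemma siteOp_mul_ne {j k : Fin L} (hjk : j ≠ k) (M N : Matrix (Fin 2) (Fin 2) ℂ)
    (f g : Fin L → Fin 2) :
    (siteOp L M j * siteOp L N k) f g =
      (if ∀ i, i ≠ j → i ≠ k → f i = g i then 1 else 0) * (M (f j) (g j) * N (f k) (g k)) := by
  rw [Matrix.mul_apply]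
  rw [sumCollapse2 (fun hh => siteOp L M j f hh * siteOp L N k hh g) f j]
  · have key : ∀ x : Fin 2, (∀ i, i ≠ k → Function.update f j x i = g i) ↔
        (x = g j ∧ ∀ i, i ≠ j → i ≠ k → f i = g i) := by
      intro x; constructor
      · intro h
        refine ⟨?_, ?_⟩
        · have := h j hjk; simpa using this
        · intro i hij hik; have := h i hik; rwa [Function.update_of_ne hij] at this
      · rintro ⟨hx, hC⟩ i hik
        by_cases hij : i = j
        · subst hij; simp [hx]
        · rw [Function.update_of_ne hij]; exact hC i hij hik
    have triv : ∀ x : Fin 2, (∀ i, i ≠ j → f i = Function.update f j x i) := by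
      intro x i hij; rw [Function.update_of_ne hij]
    simp only [siteOp, ne_eq]
    rw [if_pos (triv 0), if_pos (triv 1)]
    have hk0 : Function.update f j (0 : Fin 2) k = f k := Function.update_of_ne (Ne.symm hjk) _ _
    have hk1 : Function.update f j (1 : Fin 2) k = f k := Function.update_of_ne (Ne.symm hjk) _ _
    rw [hk0, hk1]
    by_cases hC : ∀ i, i ≠ j → i ≠ k → f i = g i
    · rw [if_pos hC]
      rcases fin2cases (g j) with h2 | h2
      · rw [if_pos ((key 0).2 ⟨h2.symm, hC⟩), if_neg (fun hm => by
          have := ((key 1).1 hm).1; rw [h2] at this; exact absurd this (by decide))]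
        simp [h2]
      · rw [if_neg (fun hm => by
          have := ((key 0).1 hm).1; rw [h2] at this; exact absurd this (by decide)),
          if_pos ((key 1).2 ⟨h2.symm, hC⟩)]
        simp [h2]
    · rw [if_neg hC]
      rw [if_neg (fun hm => hC ((key _).1 hm).2), if_neg (fun hm => hC ((key _).1 hm).2)]
      ring
  · intro h hh
    simp only [siteOp, ne_eq]
    rw [if_neg (by simpa using hh)]
    ring
lemma siteOp_comm {j k : Fin L} (hjk : j ≠ k) (M N : Matrix (Fin 2) (Fin 2) ℂ) :
    siteOp L M j * siteOp L N k = siteOp L N k * siteOp L M j := by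
  ext f g
  rw [siteOp_mul_ne hjk, siteOp_mul_ne hjk.symm]
  have : (∀ i, i ≠ j → i ≠ k → f i = g i) ↔ (∀ i, i ≠ k → i ≠ j → f i = g i) := by
    constructor <;> (intro h i h1 h2; exact h i h2 h1)
  rw [if_congr this rfl rfl]
  ring
lemma siteOp_one (k : Fin L) : siteOp L 1 k = 1 := by
  ext f g
  simp only [siteOp, Matrix.one_apply]
  by_cases hfg : f = g
  · subst hfg; simp
  · by_cases hc : ∀ j, j ≠ k → f j = g j
    · have hk : f k ≠ g k := by
        intro h; apply hfg; funext i
        by_cases hi : i = k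
        · subst hi; exact h
        · exact hc i hi
      simp only [ne_eq] at hc
      rw [if_pos hc, if_neg hk, if_neg hfg]
      ring
    · simp only [ne_eq] at hc
      rw [if_neg hc, if_neg hfg]
      ring
lemma siteOp_smul (c : ℂ) (M : Matrix (Fin 2) (Fin 2) ℂ) (k : Fin L) :
    siteOp L (c • M) k = c • siteOp L M k := by
  ext f g; simp only [siteOp, Matrix.smul_apply, smul_eq_mul]; ring
lemma siteOp_add (M N : Matrix (Fin 2) (Fin 2) ℂ) (k : Fin L) :
    siteOp L (M + N) k = siteOp L M k + siteOp L N k := by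
  ext f g; simp only [siteOp, Matrix.add_apply]; split <;> ring
lemma siteOp_zero (k : Fin L) : siteOp L (0 : Matrix (Fin 2) (Fin 2) ℂ) k = 0 := by
  ext f g; simp [siteOp]
lemma sigPlus_eq : sigPlus = !![0, 1; 0, 0] := by
  unfold sigPlus pauli1 pauli2
  ext i j
  fin_cases i <;> fin_cases j <;> simp <;> ring
lemma sigMinus_eq : sigMinus = !![0, 0; 1, 0] := by
  unfold sigMinus pauli1 pauli2
  ext i j
  fin_cases i <;> fin_cases j <;> simp <;> ring
lemma pauli3_sq : pauli3 * pauli3 = 1 := by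
  simp [pauli3]
  ext i j
  fin_cases i <;> fin_cases j <;> simp [Matrix.mul_apply, Fin.sum_univ_two, Matrix.one_apply]
lemma sigPlus_sq : sigPlus * sigPlus = 0 := by
  rw [sigPlus_eq]
  ext i j
  fin_cases i <;> fin_cases j <;> simp [Matrix.mul_apply, Fin.sum_univ_two]
lemma sigMinus_sq : sigMinus * sigMinus = 0 := by
  rw [sigMinus_eq]
  ext i j
  fin_cases i <;> fin_cases j <;> simp [Matrix.mul_apply, Fin.sum_univ_two]
lemma sig_anticomm : sigPlus * sigMinus + sigMinus * sigPlus = 1 := by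
  rw [sigPlus_eq, sigMinus_eq]
  ext i j
  fin_cases i <;> fin_cases j <;>
    simp [Matrix.mul_apply, Fin.sum_univ_two, Matrix.one_apply]
lemma sigPlus_p3 : sigPlus * pauli3 = -(pauli3 * sigPlus) := by
  rw [sigPlus_eq]
  ext i j
  fin_cases i <;> fin_cases j <;> simp [pauli3, Matrix.mul_apply, Fin.sum_univ_two]
lemma sigMinus_p3 : sigMinus * pauli3 = -(pauli3 * sigMinus) := by
  rw [sigMinus_eq]
  ext i j
  fin_cases i <;> fin_cases j <;> simp [pauli3, Matrix.mul_apply, Fin.sum_univ_two]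
lemma siteOp_neg (M : Matrix (Fin 2) (Fin 2) ℂ) (k : Fin L) :
    siteOp L (-M) k = - siteOp L M k := by
  ext f g; simp only [siteOp, Matrix.neg_apply]; ring
lemma commute_siteOp_smul_siteOp {k j : Fin L} (h : j ≠ k) (M N : Matrix (Fin 2) (Fin 2) ℂ)
    (c : ℂ) : Commute (siteOp L M k) (c • siteOp L N j) :=
  Commute.smul_right (siteOp_comm h.symm M N) c
lemma commute_siteOp_jwString {k l : Fin L} (hkl : ¬ k < l) (M : Matrix (Fin 2) (Fin 2) ℂ)
    (c : ℂ) : Commute (siteOp L M k) (jwString L c l) := by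
  apply Commute.list_prod_right
  intro x hx
  obtain ⟨j, hj, rfl⟩ := List.mem_map.1 hx
  have hjl : j < l := by simpa using (List.mem_filter.1 hj).2
  exact commute_siteOp_smul_siteOp (fun h : j = k => hkl (h ▸ hjl)) M pauli3 c
lemma commute_jwString_jwString (c c' : ℂ) (k l : Fin L) :
    Commute (jwString L c k) (jwString L c' l) := by
  apply Commute.list_prod_right
  intro x hx
  obtain ⟨j, _, rfl⟩ := List.mem_map.1 hx
  apply Commute.list_prod_left
  intro z hz
  obtain ⟨i, _, rfl⟩ := List.mem_map.1 hz
  by_cases hij : i = j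
  · subst hij
    exact Commute.smul_right (Commute.smul_left (Commute.refl _) c) c'
  · exact Commute.smul_right (Commute.smul_left (siteOp_comm hij pauli3 pauli3) c) c'
lemma prod_anticomm (A : Matrix (Fin L → Fin 2) (Fin L → Fin 2) ℂ)
    (F : Fin L → Matrix (Fin L → Fin 2) (Fin L → Fin 2) ℂ) (k : Fin L)
    (hk : A * F k = -(F k * A)) (hc : ∀ j, j ≠ k → Commute A (F j)) :
    ∀ js : List (Fin L),
      A * (js.map F).prod = ((-1 : ℂ) ^ (js.count k)) • ((js.map F).prod * A)
  | [] => by simp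
  | j :: t => by
    simp only [List.map_cons, List.prod_cons, List.count_cons, beq_iff_eq]
    by_cases hj : j = k
    · subst hj
      rw [← mul_assoc, hk, if_pos rfl, neg_mul, mul_assoc, prod_anticomm A F j hk hc t]
      rw [mul_smul_comm, ← neg_smul, mul_assoc (F j)]
      congr 1
      rw [pow_succ]; ring
    · rw [← mul_assoc, (hc j hj).eq, if_neg hj, add_zero, mul_assoc,
        prod_anticomm A F k hk hc t, mul_smul_comm, ← mul_assoc]
lemma count_filter_lt (k l : Fin L) :
    ((List.finRange L).filter fun j => j < l).count k = if k < l then 1 else 0 := by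
  by_cases h : k < l
  · rw [if_pos h]
    apply List.count_eq_one_of_mem ((List.nodup_finRange L).filter _)
    simp [List.mem_filter, h]
  · rw [if_neg h]
    apply List.count_eq_zero_of_not_mem
    simp [List.mem_filter, h]
lemma siteOp_mul_jwString {k l : Fin L} (hkl : k < l) (M : Matrix (Fin 2) (Fin 2) ℂ)
    (hM : M * pauli3 = -(pauli3 * M)) (c : ℂ) :
    siteOp L M k * jwString L c l = -(jwString L c l * siteOp L M k) := by
  have := prod_anticomm (siteOp L M k) (fun j => c • siteOp L pauli3 j) k
    (by
      rw [mul_smul_comm, smul_mul_assoc, siteOp_mul_same, siteOp_mul_same, hM, siteOp_neg]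
      simp)
    (fun j hj => commute_siteOp_smul_siteOp (Ne.symm (Ne.symm hj)) M pauli3 c)
    ((List.finRange L).filter fun j => j < l)
  rw [jwString, this, count_filter_lt, if_pos hkl]
  simp
lemma prod_pair_strings (c c' : ℂ) : ∀ js : List (Fin L), js.Nodup →
    (js.map fun j => c • siteOp L pauli3 j).prod *
      (js.map fun j => c' • siteOp L pauli3 j).prod = ((c * c') ^ js.length) • 1
  | [], _ => by simp
  | a :: t, h => by
    obtain ⟨ha, ht⟩ := List.nodup_cons.1 h
    have hcomm : Commute ((t.map fun j => c • siteOp L pauli3 j).prod)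
        ((c' : ℂ) • siteOp L pauli3 a) := by
      apply Commute.list_prod_left
      intro x hx
      obtain ⟨j, hj, rfl⟩ := List.mem_map.1 hx
      exact Commute.smul_left
        (commute_siteOp_smul_siteOp (fun he : a = j => ha (he ▸ hj)) pauli3 pauli3 c') c
    simp only [List.map_cons, List.prod_cons, List.length_cons]
    rw [mul_assoc, ← mul_assoc ((t.map fun j => c • siteOp L pauli3 j).prod), hcomm.eq,
      mul_assoc, prod_pair_strings c c' t ht, ← mul_assoc, smul_mul_smul,
      siteOp_mul_same, pauli3_sq, siteOp_one]
    simp only [mul_one, smul_smul, pow_succ, mul_pow]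
    rw [smul_mul_smul, one_mul]
    congr 1
    ring
lemma jwString_mul_jwString_one {c c' : ℂ} (h : c * c' = 1) (k : Fin L) :
    jwString L c k * jwString L c' k = 1 := by
  rw [jwString, jwString, prod_pair_strings c c' _ ((List.nodup_finRange L).filter _), h]
  simp
lemma rearrange (A S B T : Matrix (Fin L → Fin 2) (Fin L → Fin 2) ℂ)
    (h : S * B = B * S) : (A * S) * (B * T) = (A * B) * (S * T) := by
  rw [mul_assoc, ← mul_assoc S, h, mul_assoc, ← mul_assoc]
lemma psi_anticomm_lt {k l : Fin L} (hkl : k < l) (ε ε' : Bool)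
    (hsigp3 : ∀ b : Bool, (if b then sigPlus else sigMinus) * pauli3 =
      -(pauli3 * (if b then sigPlus else sigMinus))) :
    psi L ε k * psi L ε' l + psi L ε' l * psi L ε k = 0 := by
  set A := siteOp L (if ε then sigPlus else sigMinus) k with hA
  set B := siteOp L (if ε' then sigPlus else sigMinus) l with hB
  set S := jwString L (if ε then -I else I) k with hS
  set T := jwString L (if ε' then -I else I) l with hT
  have hAT : A * T = -(T * A) := siteOp_mul_jwString hkl _ (hsigp3 ε) _
  have hBS : Commute B S := commute_siteOp_jwString (not_lt.2 hkl.le) _ _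
  have hABc : Commute A B := show A * B = B * A from siteOp_comm hkl.ne _ _
  have hST : Commute S T := commute_jwString_jwString _ _ _ _
  have e1 : (A * S) * (B * T) = (A * B) * (S * T) := rearrange A S B T hBS.symm.eq
  have e2 : (B * T) * (A * S) = -((A * B) * (S * T)) := by
    calc (B * T) * (A * S) = B * ((T * A) * S) := by rw [mul_assoc, mul_assoc]
      _ = B * ((-(A * T)) * S) := by rw [show T * A = -(A * T) from by rw [hAT, neg_neg]]
      _ = -(B * (A * (T * S))) := by simp only [neg_mul, mul_neg, mul_assoc]
      _ = -((A * B) * (S * T)) := by rw [← mul_assoc B A, ← hABc.eq, ← hST.eq, mul_assoc]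
  rw [psi, psi, ← hA, ← hB, ← hS, ← hT, e1, e2]
  simp
lemma hsigp3_all : ∀ b : Bool, (if b then sigPlus else sigMinus) * pauli3 =
    -(pauli3 * (if b then sigPlus else sigMinus)) := by
  intro b; cases b
  · exact sigMinus_p3
  · exact sigPlus_p3
lemma psi_anticomm (k l : Fin L) (ε ε' : Bool) :
    psi L ε k * psi L ε' l + psi L ε' l * psi L ε k =
      (if k = l ∧ ε = !ε' then (1 : ℂ) else 0) • 1 := by
  rcases lt_trichotomy k l with hkl | hkl | hkl
  · rw [psi_anticomm_lt hkl ε ε' hsigp3_all, if_neg (fun h => hkl.ne h.1), zero_smul]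
  · subst hkl
    set A := siteOp L (if ε then sigPlus else sigMinus) k with hA
    set B := siteOp L (if ε' then sigPlus else sigMinus) k with hB
    set S := jwString L (if ε then -I else I) k with hS
    set T := jwString L (if ε' then -I else I) k with hT
    have hBS : Commute B S := commute_siteOp_jwString (lt_irrefl k) _ _
    have hAT : Commute A T := commute_siteOp_jwString (lt_irrefl k) _ _
    have hST : Commute S T := commute_jwString_jwString _ _ _ _
    have e1 : (A * S) * (B * T) = (A * B) * (S * T) := rearrange A S B T hBS.symm.eq
    have e2 : (B * T) * (A * S) = (B * A) * (S * T) := by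
      rw [rearrange B T A S hAT.symm.eq, hST.eq]
    rw [psi, psi, ← hA, ← hB, ← hS, ← hT, e1, e2, ← add_mul, hA, hB,
      siteOp_mul_same, siteOp_mul_same, ← siteOp_add]
    by_cases hee : ε = ε'
    · subst hee
      have hz : (if ε then sigPlus else sigMinus) * (if ε then sigPlus else sigMinus) +
          (if ε then sigPlus else sigMinus) * (if ε then sigPlus else sigMinus) = 0 := by
        cases ε <;> simp [sigPlus_sq, sigMinus_sq]
      rw [hz, siteOp_zero, zero_mul, if_neg (by simp)]
      simp
    · have ho : (if ε then sigPlus else sigMinus) * (if ε' then sigPlus else sigMinus) +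
          (if ε' then sigPlus else sigMinus) * (if ε then sigPlus else sigMinus) = 1 := by
        cases ε <;> cases ε' <;> simp_all
        · rw [add_comm]; exact sig_anticomm
        · exact sig_anticomm
      have hc1 : (if ε then (-I : ℂ) else I) * (if ε' then -I else I) = 1 := by
        cases ε <;> cases ε' <;> simp_all [Complex.I_mul_I]
      rw [ho, siteOp_one, one_mul, hS, hT, jwString_mul_jwString_one hc1,
        if_pos ⟨rfl, by cases ε <;> cases ε' <;> simp_all⟩, one_smul]
  · rw [add_comm, psi_anticomm_lt hkl ε' ε hsigp3_all,
      if_neg (fun h => hkl.ne h.1.symm), zero_smul]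
lemma master (A B X : Matrix (Fin L → Fin 2) (Fin L → Fin 2) ℂ) (p : ℕ)
    (δ q q' c c' : ℂ)
    (hAB : A * B + B * A = δ • (1 : Matrix (Fin L → Fin 2) (Fin L → Fin 2) ℂ)) :
    c • (A * (c' • (B * X - q' • ((-1 : ℂ)) ^ p • (X * B))) -
        q • ((-1 : ℂ)) ^ (p + 1) • ((c' • (B * X - q' • ((-1 : ℂ)) ^ p • (X * B))) * A)) +
      c' • (B * (c • (A * X - q • ((-1 : ℂ)) ^ p • (X * A))) -
        q' • ((-1 : ℂ)) ^ (p + 1) • ((c • (A * X - q • ((-1 : ℂ)) ^ p • (X * A))) * B)) =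
      (c * c' * (δ * (1 - q * q'))) • X := by
  have hBA : B * A = δ • 1 - A * B := eq_sub_of_add_eq' hAB
  have hABX : A * (B * X) = (A * B) * X := by rw [mul_assoc]
  have hXBA : (X * B) * A = X * (δ • 1 - A * B) := by rw [mul_assoc, hBA]
  have hXAB : (X * A) * B = X * (A * B) := by rw [mul_assoc]
  have hBAX : B * (A * X) = (δ • 1 - A * B) * X := by rw [← mul_assoc, hBA]
  have hAXB : (A * X) * B = A * (X * B) := by rw [mul_assoc]
  have hBXA : (B * X) * A = B * (X * A) := by rw [mul_assoc]
  rcases Nat.even_or_odd p with hp | hp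
  · have h1 : ((-1 : ℂ)) ^ p = 1 := hp.neg_one_pow
    have h2 : ((-1 : ℂ)) ^ (p + 1) = -1 := by rw [pow_succ, h1]; ring
    simp only [h1, h2, one_smul, neg_smul, smul_sub, mul_sub, sub_mul, smul_mul_assoc,
      mul_smul_comm, smul_smul, mul_neg, neg_mul, smul_neg, neg_neg, sub_neg_eq_add,
      neg_sub, mul_add, add_mul, smul_add, hAXB, hBXA, hABX, hXBA, hXAB, hBAX, one_mul, mul_one]
    match_scalars <;> ring
  · have h1 : ((-1 : ℂ)) ^ p = -1 := hp.neg_one_pow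
    have h2 : ((-1 : ℂ)) ^ (p + 1) = 1 := by rw [pow_succ, h1]; ring
    simp only [h1, h2, one_smul, neg_smul, smul_sub, mul_sub, sub_mul, smul_mul_assoc,
      mul_smul_comm, smul_smul, mul_neg, neg_mul, smul_neg, neg_neg, sub_neg_eq_add,
      neg_sub, mul_add, add_mul, smul_add, hAXB, hBXA, hABX, hXBA, hXAB, hBAX, one_mul, mul_one]
    match_scalars <;> ring

/-- Canonical anticommutation relations for the operators `Ψ` and `Φ` acting on the
space of operators at the free fermion point: for parity-homogeneous `X` of parity `p`
(so that `Ψ_k^ε(X)`, `Φ_k^ε(X)` have parity `p + 1`),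
`{Ψ_k^ε, Ψ_l^{ε'}}(X) = 0`, `{Φ_k^ε, Φ_l^{ε'}}(X) = 0`, and
`{Ψ_k^ε, Φ_l^{ε'}}(X) = δ_{k,l} δ_{ε,−ε'} X`. -/
theorem Psi_Phi_CAR (L : ℕ) (y : ℂ) (hy : y ≠ 0) (hy4 : y ^ 4 ≠ 1)
    (X : Matrix (Fin L → Fin 2) (Fin L → Fin 2) ℂ) (p : ℕ)
    (hX : parityOp L * X * parityOp L = ((-1 : ℂ)) ^ p • X)
    (k l : Fin L) (ε ε' : Bool) :
    PsiOp L ε k (p + 1) (PsiOp L ε' l p X) + PsiOp L ε' l (p + 1) (PsiOp L ε k p X) = 0 ∧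
      PhiOp L y ε k (p + 1) (PhiOp L y ε' l p X) +
          PhiOp L y ε' l (p + 1) (PhiOp L y ε k p X) = 0 ∧
      PsiOp L ε k (p + 1) (PhiOp L y ε' l p X) +
          PhiOp L y ε' l (p + 1) (PsiOp L ε k p X) =
        if k = l ∧ ε = !ε' then X else 0 := by
  classical
  have hAB := psi_anticomm (L := L) k l ε ε'
  set δ : ℂ := if k = l ∧ ε = !ε' then 1 else 0 with hδ
  have hy2 : y ^ 2 ≠ 1 := fun h => hy4 (by
    rw [show (4 : ℕ) = 2 * 2 from rfl, pow_mul, h, one_pow])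
  have hysgn_ne : ∀ b, ysgn y b ≠ 1 := by
    intro b
    cases b
    · simpa [ysgn] using hy2
    · simp only [ysgn, if_true]
      rw [inv_pow]
      intro h
      exact hy2 (inv_eq_one.1 h)
  have hprod : ∀ b : Bool, ysgn y b * ysgn y (!b) = 1 := by
    intro b
    have h2 : (y : ℂ) ^ 2 ≠ 0 := pow_ne_zero 2 hy
    cases b <;> simp [ysgn, inv_pow] <;> field_simp
  refine ⟨?_, ?_, ?_⟩
  · have h := master (psi L ε k) (psi L ε' l) X p δ 1 1 1 1 hAB
    simp only [one_smul] at h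
    simp only [PsiOp]
    rw [h]
    norm_num
  · have h := master (psi L ε k) (psi L ε' l) X p δ (ysgn y ε) (ysgn y ε')
      (1 - ysgn y ε)⁻¹ (1 - ysgn y ε')⁻¹ hAB
    simp only [PhiOp]
    rw [h]
    have hz : δ * (1 - ysgn y ε * ysgn y ε') = 0 := by
      by_cases hcond : k = l ∧ ε = !ε'
      · rw [hδ, if_pos hcond, hcond.2,
          show ysgn y (!ε') * ysgn y ε' = 1 from by rw [mul_comm]; exact hprod ε']
        ring
      · rw [hδ, if_neg hcond, zero_mul]
    rw [mul_assoc, hz]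
    simp
  · have h := master (psi L ε k) (psi L ε' l) X p δ 1 (ysgn y ε') 1
      (1 - ysgn y ε')⁻¹ hAB
    simp only [one_smul] at h
    simp only [PsiOp, PhiOp]
    rw [h]
    by_cases hcond : k = l ∧ ε = !ε'
    · rw [if_pos hcond, hδ, if_pos hcond]
      rw [show (1 : ℂ) * (1 - ysgn y ε')⁻¹ * (1 * (1 - 1 * ysgn y ε')) =
        (1 - ysgn y ε')⁻¹ * (1 - ysgn y ε') by ring]
      rw [inv_mul_cancel₀ (sub_ne_zero.2 (Ne.symm (hysgn_ne ε'))), one_smul]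
    · rw [if_neg hcond, hδ, if_neg hcond]
      simp
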